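/- arXiv:1902.00355 — 2 statements merged into one kernel-verified Lean document; each statement's English description precedes it below -/
import Mathlib

section
/- Let P be a poset and let A = (A, (A^(p))_{p∈P}) be a P-scaled Boolean algebra: A is a Boolean algebra, each A^(p) is an ideal of A, the ideals A^(p) join to all of A in the ideal lattice of A, and A^(p) ∩ A^(q) = ⋁_{r ≥ p, q} A^(r) for all p, q ∈ P. Then for every ultrafilter 𝔞 of A, the set ‖𝔞‖ := {p ∈ P : 𝔞 ∩ A^(p) ≠ ∅} is an ideal of P, i.e. a nonempty, downward closed, (upward) directed subset of P. -/
/-- The norm `‖𝔞‖ = {p | 𝔞 ∩ A^(p) ≠ ∅}` of an ultrafilter of a `P`-scaled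
Boolean algebra is an ideal of the poset `P` (nonempty, lower, directed). -/
theorem stmt13 {P A : Type*} [PartialOrder P] [BooleanAlgebra A]
    (I : P → Set A)
    -- each `I p` is an ideal of the Boolean algebra `A`
    (hlow : ∀ p, ∀ x y : A, x ≤ y → y ∈ I p → x ∈ I p)
    (hsup : ∀ p, ∀ x y : A, x ∈ I p → y ∈ I p → x ⊔ y ∈ I p)
    (hbot : ∀ p, (⊥ : A) ∈ I p)
    -- the ideals `I p` join to all of `A` in the ideal lattice of `A`
    (hjoin : ∀ a : A, ∃ (n : ℕ) (p : Fin n → P) (u : Fin n → A),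
      (∀ i, u i ∈ I (p i)) ∧ a ≤ Finset.univ.sup u)
    -- `I p ∩ I q = ⋁_{r ≥ p, q} I r`
    (hmeet : ∀ p q : P, ∀ x : A,
      (x ∈ I p ∧ x ∈ I q) ↔
        ∃ (n : ℕ) (r : Fin n → P) (u : Fin n → A),
          (∀ i, p ≤ r i ∧ q ≤ r i ∧ u i ∈ I (r i)) ∧ x ≤ Finset.univ.sup u)
    -- `F` is an ultrafilter of `A`
    (F : Set A)
    (hFup : ∀ x y : A, x ≤ y → x ∈ F → y ∈ F)
    (hFinf : ∀ x y : A, x ∈ F → y ∈ F → x ⊓ y ∈ F)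
    (hFproper : (⊥ : A) ∉ F)
    (hFult : ∀ x : A, x ∈ F ∨ xᶜ ∈ F) :
    ({p : P | ∃ a ∈ F, a ∈ I p}.Nonempty)
      ∧ (∀ p q : P, p ≤ q → q ∈ {p : P | ∃ a ∈ F, a ∈ I p} →
          p ∈ {p : P | ∃ a ∈ F, a ∈ I p})
      ∧ DirectedOn (· ≤ ·) {p : P | ∃ a ∈ F, a ∈ I p} := by
  -- `F` is prime: if `x ⊔ y ∈ F` then `x ∈ F` or `y ∈ F`
  have hprime : ∀ x y : A, x ⊔ y ∈ F → x ∈ F ∨ y ∈ F := by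
    intro x y hxy
    by_contra h
    push_neg at h
    have hx : xᶜ ∈ F := (hFult x).resolve_left h.1
    have hy : yᶜ ∈ F := (hFult y).resolve_left h.2
    have : (x ⊔ y) ⊓ (xᶜ ⊓ yᶜ) ∈ F := hFinf _ _ hxy (hFinf _ _ hx hy)
    have hb : (x ⊔ y) ⊓ (xᶜ ⊓ yᶜ) = (⊥ : A) := by
      rw [← compl_sup]
      exact inf_compl_eq_bot
    rw [hb] at this
    exact hFproper this
  -- primeness over finite sups
  have hfin : ∀ (n : ℕ) (u : Fin n → A), Finset.univ.sup u ∈ F → ∃ i, u i ∈ F := by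
    intro n u hsupF
    suffices h : ∀ s : Finset (Fin n), s.sup u ∈ F → ∃ i ∈ s, u i ∈ F by
      obtain ⟨i, _, hi⟩ := h Finset.univ hsupF
      exact ⟨i, hi⟩
    intro s
    induction s using Finset.induction with
    | empty => intro h; simp at h; exact absurd h hFproper
    | insert _ _ hni ih =>
      rename_i a s
      rw [Finset.sup_insert]
      intro h
      rcases hprime _ _ h with h1 | h2
      · exact ⟨a, Finset.mem_insert_self _ _, h1⟩
      · obtain ⟨i, hi, hui⟩ := ih h2
        exact ⟨i, Finset.mem_insert_of_mem hi, hui⟩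
  have htop : (⊤ : A) ∈ F := by
    rcases hFult ⊤ with h | h
    · exact h
    · exact absurd (show (⊥ : A) ∈ F by simpa using h) hFproper
  refine ⟨?_, ?_, ?_⟩
  · -- nonempty
    obtain ⟨n, p, u, hu, hle⟩ := hjoin ⊤
    have : Finset.univ.sup u ∈ F := hFup _ _ hle htop
    obtain ⟨i, hi⟩ := hfin n u this
    exact ⟨p i, u i, hi, hu i⟩
  · -- lower
    rintro p q hpq ⟨a, haF, haI⟩
    have : a ∈ I p ∧ a ∈ I q := by
      rw [hmeet]
      exact ⟨1, fun _ => q, fun _ => a, fun i => ⟨hpq, le_refl q, haI⟩, by simp⟩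
    exact ⟨a, haF, this.1⟩
  · -- directed
    rintro p ⟨a, haF, haI⟩ q ⟨b, hbF, hbI⟩
    have habF : a ⊓ b ∈ F := hFinf _ _ haF hbF
    have hab : a ⊓ b ∈ I p ∧ a ⊓ b ∈ I q :=
      ⟨hlow p _ _ inf_le_left haI, hlow q _ _ inf_le_right hbI⟩
    rw [hmeet] at hab
    obtain ⟨n, r, u, hu, hle⟩ := hab
    have : Finset.univ.sup u ∈ F := hFup _ _ hle habF
    obtain ⟨i, hi⟩ := hfin n u this
    exact ⟨r i, ⟨u i, hi, (hu i).2.2⟩, (hu i).1, (hu i).2.1⟩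
end

section
/- Let R be a unital von Neumann regular ring and e ∈ R an idempotent, and let 𝕃(R) = {xR : x ∈ R} be the lattice of principal right ideals of R ordered by inclusion. Then the maps φ_e : 𝕃(R)↓eR → 𝕃(eRe), X ↦ X ∩ eRe (which equals Xe), and ψ_e : 𝕃(eRe) → 𝕃(R)↓eR, Y ↦ YR, are mutually inverse order isomorphisms between the set of principal right ideals of R contained in eR and the set of principal right ideals of the corner ring eRe. -/
/-! A principal right ideal `X = xR ⊆ eR` of a regular ring has a generator inside the corner:
if `x = xyx` then `c = xye` satisfies `c = ece` and `cR = xR`, because `x = xyx = xyex = cx`.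
For a corner generator `c` one has `cR ∩ eRe = c·eRe` and `(c·eRe)R = cR`, so `X ↦ X ∩ eRe` and
`Y ↦ YR` are mutually inverse; both are monotone, hence they are order isomorphisms. -/

section CornerRing

variable {R : Type*} [Ring R]

def principalRight (x : R) : Set R := {z | ∃ r : R, z = x * r}

def cornerPrincipalRight (e x : R) : Set R := {z | ∃ r : R, z = x * (e * r * e)}

def cornerPart (e : R) (X : Set R) : Set R := {z ∈ X | z = e * z * e}

def rightSpan (Y : Set R) : Set R := {z | ∃ y ∈ Y, ∃ r : R, z = y * r}

lemma mem_principalRight_self (x : R) : x ∈ principalRight x := ⟨1, (mul_one x).symm⟩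

lemma principalRight_subset_principalRight {x a : R} (h : x ∈ principalRight a) :
    principalRight x ⊆ principalRight a := by
  obtain ⟨t, rfl⟩ := h
  rintro z ⟨r, rfl⟩
  exact ⟨t * r, mul_assoc _ _ _⟩

lemma mul_eq_of_mem_principalRight {e x : R} (he : e * e = e) (hx : x ∈ principalRight e) :
    e * x = x := by
  obtain ⟨r, rfl⟩ := hx
  rw [← mul_assoc, he]

lemma eq_mul_mul_iff {e c : R} (he : e * e = e) : c = e * c * e ↔ e * c = c ∧ c * e = c := by
  constructor
  · intro hc
    constructor
    · rw [hc, ← mul_assoc, ← mul_assoc, he]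
    · rw [hc, mul_assoc, he]
  · rintro ⟨hec, hce⟩
    rw [hec, hce]

lemma rightSpan_mono {Y Y' : Set R} (h : Y ⊆ Y') : rightSpan Y ⊆ rightSpan Y' :=
  fun _ ⟨y, hy, r, hz⟩ => ⟨y, h hy, r, hz⟩

lemma cornerPart_mono (e : R) {X X' : Set R} (h : X ⊆ X') : cornerPart e X ⊆ cornerPart e X' :=
  fun _ hz => ⟨h hz.1, hz.2⟩

lemma cornerPart_principalRight {e c : R} (he : e * e = e) (hc : c = e * c * e) :
    cornerPart e (principalRight c) = cornerPrincipalRight e c := by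
  obtain ⟨hec, hce⟩ := (eq_mul_mul_iff he).1 hc
  ext z
  constructor
  · rintro ⟨⟨r, rfl⟩, hz⟩
    refine ⟨r, ?_⟩
    calc c * r = e * (c * r) * e := hz
      _ = c * e * r * e := by rw [← mul_assoc, hec, hce]
      _ = c * (e * r * e) := by simp only [mul_assoc]
  · rintro ⟨r, rfl⟩
    refine ⟨⟨e * r * e, rfl⟩, (eq_mul_mul_iff he).2 ⟨?_, ?_⟩⟩
    · rw [← mul_assoc, hec]
    · simp only [mul_assoc, he]

lemma rightSpan_cornerPrincipalRight {e c : R} (he : e * e = e) (hc : c = e * c * e) :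
    rightSpan (cornerPrincipalRight e c) = principalRight c := by
  ext z
  constructor
  · rintro ⟨_, ⟨r, rfl⟩, s, rfl⟩
    exact ⟨e * r * e * s, by simp only [mul_assoc]⟩
  · rintro ⟨r, rfl⟩
    refine ⟨c, ⟨1, ?_⟩, r, rfl⟩
    rw [mul_one, he, ((eq_mul_mul_iff he).1 hc).2]

lemma cornerPart_eq_image_mul {e : R} (he : e * e = e) {X : Set R}
    (hXe : X ⊆ principalRight e) (hX : ∀ x ∈ X, ∀ r : R, x * r ∈ X) :
    cornerPart e X = {z | ∃ x ∈ X, z = x * e} := by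
  ext z
  constructor
  · rintro ⟨hzX, hz⟩
    exact ⟨z, hzX, ((eq_mul_mul_iff he).1 hz).2.symm⟩
  · rintro ⟨x, hx, rfl⟩
    refine ⟨hX x hx e, ?_⟩
    rw [← mul_assoc, mul_eq_of_mem_principalRight he (hXe hx), mul_assoc, he]

lemma exists_corner_generator {e x y : R} (he : e * e = e) (hy : x = x * y * x)
    (hxe : x ∈ principalRight e) : ∃ c, c = e * c * e ∧ principalRight c = principalRight x := by
  have hex := mul_eq_of_mem_principalRight he hxe
  refine ⟨x * y * e, (eq_mul_mul_iff he).2 ⟨?_, ?_⟩, ?_⟩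
  · rw [← mul_assoc, ← mul_assoc, hex]
  · rw [mul_assoc, he]
  · apply (principalRight_subset_principalRight ⟨y * e, by rw [mul_assoc]⟩).antisymm
    refine principalRight_subset_principalRight ⟨x, ?_⟩
    rw [mul_assoc (x * y) e x, hex]
    exact hy

end CornerRing

theorem stmt16 {R : Type*} [Ring R]
    (hreg : ∀ x : R, ∃ y : R, x = x * y * x)
    (e : R) (he : e * e = e)
    -- `LR` is the lattice `𝕃(R)` of principal right ideals of `R`
    (LR : Set (Set R)) (hLR : LR = {X | ∃ x : R, X = {z | ∃ r : R, z = x * r}})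
    -- `LC` is the lattice `𝕃(eRe)` of principal right ideals of the corner `eRe`
    (LC : Set (Set R))
    (hLC : LC = {Y | ∃ x : R, x = e * x * e ∧
      Y = {z | ∃ r : R, z = x * (e * r * e)}})
    -- `φ X = X ∩ eRe` and `ψ Y = Y·R`
    (φ : Set R → Set R) (hφ : ∀ X, φ X = {z ∈ X | z = e * z * e})
    (ψ : Set R → Set R) (hψ : ∀ Y, ψ Y = {z | ∃ y ∈ Y, ∃ r : R, z = y * r}) :
    (∀ X ∈ LR, X ⊆ {z | ∃ r : R, z = e * r} →
        φ X ∈ LC ∧ ψ (φ X) = X ∧ φ X = {z | ∃ x ∈ X, z = x * e})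
      ∧ (∀ Y ∈ LC, ψ Y ∈ LR ∧ ψ Y ⊆ {z | ∃ r : R, z = e * r} ∧ φ (ψ Y) = Y)
      ∧ (∀ X ∈ LR, ∀ X' ∈ LR, X ⊆ {z | ∃ r : R, z = e * r} →
          X' ⊆ {z | ∃ r : R, z = e * r} → (X ⊆ X' ↔ φ X ⊆ φ X')) := by
  replace hLR : LR = {X | ∃ x : R, X = principalRight x} := hLR
  replace hLC : LC = {Y | ∃ x : R, x = e * x * e ∧ Y = cornerPrincipalRight e x} := hLC
  subst hLR hLC
  obtain rfl : φ = cornerPart e := funext hφ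
  obtain rfl : ψ = rightSpan := funext hψ
  have corner_generator : ∀ X ∈ {X | ∃ x : R, X = principalRight x}, X ⊆ principalRight e →
      ∃ c, c = e * c * e ∧ X = principalRight c := by
    rintro X ⟨x, rfl⟩ hXe
    obtain ⟨y, hy⟩ := hreg x
    obtain ⟨c, hc, hcx⟩ := exists_corner_generator he hy (hXe (mem_principalRight_self x))
    exact ⟨c, hc, hcx.symm⟩
  have rightSpan_cornerPart : ∀ X ∈ {X | ∃ x : R, X = principalRight x},
      X ⊆ principalRight e → rightSpan (cornerPart e X) = X := by
    intro X hX hXe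
    obtain ⟨c, hc, rfl⟩ := corner_generator X hX hXe
    rw [cornerPart_principalRight he hc, rightSpan_cornerPrincipalRight he hc]
  refine ⟨fun X hX hXe => ⟨?_, rightSpan_cornerPart X hX hXe, ?_⟩, ?_, ?_⟩
  · obtain ⟨c, hc, rfl⟩ := corner_generator X hX hXe
    exact ⟨c, hc, cornerPart_principalRight he hc⟩
  · obtain ⟨x, rfl⟩ := hX
    exact cornerPart_eq_image_mul he hXe fun _ hz r =>
      principalRight_subset_principalRight hz ⟨r, rfl⟩
  · rintro Y ⟨c, hc, rfl⟩
    rw [rightSpan_cornerPrincipalRight he hc]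
    exact ⟨⟨c, rfl⟩, principalRight_subset_principalRight ⟨c, ((eq_mul_mul_iff he).1 hc).1.symm⟩,
      cornerPart_principalRight he hc⟩
  · intro X hX X' hX' hXe hX'e
    refine ⟨cornerPart_mono e, fun h => ?_⟩
    simpa only [rightSpan_cornerPart X hX hXe, rightSpan_cornerPart X' hX' hX'e]
      using rightSpan_mono h
end
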